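/- Let F be a family of k-element subsets of [n] with |A ∩ B| ≠ k−2 for all distinct A, B ∈ F, where k ≥ 4. Then |F| ≤ (n−k+3)·C(n,k−3)/C(k,k−3). -/

import Mathlib

/-!
Fix a `(k - 3)`-set `A`. Removing `A` from the members of `F` that contain it leaves `3`-sets whose
pairwise intersections have size `0` or `2` (size `1` would mean `|S ∩ T| = k - 2`): an oddtown
family inside the complement of `A`. Over `𝔽₂` their indicator vectors have the identity as Gram
matrix, so there are at most `n - k + 3` of them. Double counting the pairs `A ⊆ S ∈ F` finishes.
-/

open Finset

theorem card_le_card_of_odd_card_of_even_card_inter {ι α : Type*} [DecidableEq α]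
    (s : Finset ι) (U : Finset α) (f : ι → Finset α) (hU : ∀ i ∈ s, f i ⊆ U)
    (hodd : ∀ i ∈ s, Odd #(f i)) (heven : ∀ i ∈ s, ∀ j ∈ s, i ≠ j → Even #(f i ∩ f j)) :
    #s ≤ #U := by
  classical
  let V : Matrix s U (ZMod 2) := Matrix.of fun i x => if (x : α) ∈ f i then 1 else 0
  have hgram : V * V.transpose = 1 := by
    ext i j
    have hcard : (V * V.transpose) i j = (#(f i ∩ f j) : ZMod 2) := by
      simp only [V, Matrix.mul_apply, Matrix.transpose_apply, Matrix.of_apply, ite_mul, one_mul,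
        zero_mul, ← ite_and, ← mem_inter, Finset.sum_boole]
      rw [← card_map (Function.Embedding.subtype _)]
      congr 2
      ext x
      simp only [mem_map, mem_filter, mem_univ, true_and, Function.Embedding.subtype_apply]
      exact ⟨fun ⟨y, hy, hyx⟩ => hyx ▸ hy, fun hx => ⟨⟨x, hU i i.2 (mem_inter.1 hx).1⟩, hx, rfl⟩⟩
    rw [hcard, Matrix.one_apply]
    split_ifs with hij
    · rw [hij, inter_self, ZMod.natCast_eq_one_iff_odd]
      exact hodd j j.2
    · exact (ZMod.natCast_eq_zero_iff_even).2 (heven i i.2 j j.2 (fun h => hij (Subtype.ext h)))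
  calc #s = (1 : Matrix s s (ZMod 2)).rank := by rw [Matrix.rank_one, Fintype.card_coe]
    _ ≤ V.rank := hgram ▸ Matrix.rank_mul_le_left _ _
    _ ≤ #U := (Matrix.rank_le_card_width V).trans_eq (Fintype.card_coe U)

theorem card_inter_lt_of_ne {α : Type*} [DecidableEq α] {S T : Finset α} (hST : S ≠ T)
    (hcard : #S = #T) : #(S ∩ T) < #S :=
  card_lt_card <| inf_lt_left.2 fun hsub => hST (eq_of_subset_of_card_le hsub hcard.ge)

theorem card_filter_superset_le {α : Type*} [Fintype α] [DecidableEq α] {k : ℕ}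
    {F : Finset (Finset α)} (huniform : ∀ S ∈ F, #S = k)
    (havoid : ∀ S ∈ F, ∀ T ∈ F, S ≠ T → #(S ∩ T) ≠ k - 2)
    {A : Finset α} (hA : #A + 3 = k) :
    #{S ∈ F | A ⊆ S} ≤ Fintype.card α - #A := by
  rw [← card_compl]
  refine card_le_card_of_odd_card_of_even_card_inter _ _ (· \ A)
    (fun S _ x hx => mem_compl.2 (mem_sdiff.1 hx).2) (fun S hS => ?_) (fun S hS T hT hST => ?_)
  · rw [mem_filter] at hS
    rw [card_sdiff_of_subset hS.2, huniform S hS.1, ← hA, Nat.add_sub_cancel_left]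
    exact odd_two_mul_add_one 1
  · rw [mem_filter] at hS hT
    have hAST : A ⊆ S ∩ T := subset_inter hS.2 hT.2
    have hlt := card_inter_lt_of_ne hST ((huniform S hS.1).trans (huniform T hT.1).symm)
    have hge := card_le_card hAST
    have hne := havoid S hS.1 T hT.1 hST
    rw [huniform S hS.1] at hlt
    rw [show S \ A ∩ (T \ A) = (S ∩ T) \ A from inf_sdiff.symm, card_sdiff_of_subset hAST]
    obtain h | h : #(S ∩ T) - #A = 0 ∨ #(S ∩ T) - #A = 2 := by omega
    all_goals simp [h]

/-- If `F` is a family of `k`-subsets of `[n]` (`k ≥ 4`) with `|S ∩ T| ≠ k - 2`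
for all distinct `S, T ∈ F`, then `C(k, k-3) · |F| ≤ C(n, k-3) · (n - k + 3)`,
i.e. `|F| ≤ (n-k+3)·C(n,k-3)/C(k,k-3)`. -/
theorem forbidden_intersection_bound (n k : ℕ) (hk : 4 ≤ k)
    (F : Finset (Finset (Fin n)))
    (huniform : ∀ S ∈ F, S.card = k)
    (havoid : ∀ S ∈ F, ∀ T ∈ F, S ≠ T → (S ∩ T).card ≠ k - 2) :
    Nat.choose k (k - 3) * F.card ≤ Nat.choose n (k - 3) * (n - k + 3) := by
  have hdeg : ∀ S ∈ F, Nat.choose k (k - 3) ≤ #{A ∈ univ.powersetCard (k - 3) | A ⊆ S} := by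
    intro S hS
    rw [← huniform S hS, ← card_powersetCard]
    refine card_le_card fun A hA => ?_
    obtain ⟨hAS, hA⟩ := mem_powersetCard.1 hA
    simp [hAS, hA]
  have hlink : ∀ A ∈ univ.powersetCard (k - 3), #{S ∈ F | A ⊆ S} ≤ n - k + 3 := by
    intro A hA
    obtain ⟨-, hA⟩ := mem_powersetCard.1 hA
    have := card_filter_superset_le huniform havoid (A := A) (by omega)
    rw [Fintype.card_fin, hA] at this
    omega
  calc Nat.choose k (k - 3) * #F = #F * Nat.choose k (k - 3) := mul_comm _ _
    _ ≤ #(univ.powersetCard (k - 3)) * (n - k + 3) :=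
        card_mul_le_card_mul (fun S A : Finset (Fin n) => A ⊆ S) hdeg hlink
    _ = Nat.choose n (k - 3) * (n - k + 3) := by rw [card_powersetCard, card_univ, Fintype.card_fin]
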